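/- arXiv:2407.02671 — 7 statements merged into one kernel-verified Lean document; each statement's English description precedes it below -/
import Mathlib

section
/- Let M₁, M₀ be {0,1}-valued random variables and Y_{1,1}, Y_{1,0} integrable random variables on a common probability space. Let G₁, G₀ be random variables with G_a having the same distribution as M_a, and (G₁, G₀) independent of (Y_{1,1}, Y_{1,0}). Define Y_{1,X} := Y_{1,1}·X + Y_{1,0}·(1−X) for any {0,1}-valued X. Then E[Y_{1,M₁} − Y_{1,M₀}] − E[Y_{1,G₁} − Y_{1,G₀}] = Cov(M₁ − M₀, Y_{1,1} − Y_{1,0}). -/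
/-!
With `D = Y₁₁ - Y₁₀` one has `Y_{1,X} = Y₁₀ + D X`, so the left side is
`E[D M₁] - E[D M₀] - (E[D G₁] - E[D G₀])`, and independence gives
`E[D G_a] = E[D] E[G_a] = E[D] E[M_a]`.

The work lies in measurability. If `D = 0` a.e. everything vanishes. Otherwise
`{G_a = 1} ∩ {D ≠ 0}` is null measurable, being `{(D G_a) / D = 1}`; independence from `D`,
applied on the set `{D ≠ 0}` of positive measure, yields `μ {G_a = 1} + μ {G_a ≠ 1} = 1`,
which makes `{G_a = 1}` null measurable; finally `M_a` inherits a.e. measurability from the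
nonzero law it shares with `G_a`.
-/

open MeasureTheory ProbabilityTheory Set

section

variable {Ω : Type*} [MeasurableSpace Ω] {μ : Measure Ω}

theorem nullMeasurableSet_of_measure_add_measure_compl [IsFiniteMeasure μ] {s : Set Ω}
    (h : μ s + μ sᶜ = μ univ) : NullMeasurableSet s μ := by
  set t := toMeasurable μ s
  have ht : MeasurableSet t := measurableSet_toMeasurable μ s
  have hst : s ⊆ t := subset_toMeasurable μ s
  have hcompl : μ sᶜ = μ tᶜ := by
    have := measure_add_measure_compl (μ := μ) ht
    rw [measure_toMeasurable, ← h] at this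
    exact (ENNReal.add_right_inj (measure_ne_top μ s)).1 this.symm
  have hnull : μ (t \ s) = 0 := by
    have hsplit := measure_inter_add_sdiff (μ := μ) sᶜ ht
    rw [show sᶜ ∩ t = t \ s by rw [sdiff_eq, inter_comm],
      show sᶜ \ t = tᶜ by rw [sdiff_eq, inter_eq_right.2 (compl_subset_compl.2 hst)],
      hcompl] at hsplit
    exact (ENNReal.add_left_inj (measure_ne_top μ tᶜ)).1 (hsplit.trans (zero_add _).symm)
  exact ht.nullMeasurableSet.congr (ae_eq_set.2 ⟨hnull, by simp [sdiff_eq_empty.2 hst]⟩)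

theorem integrable_of_forall_eq_zero_or_eq_one [IsFiniteMeasure μ] {X : Ω → ℝ}
    (hX : ∀ ω, X ω = 0 ∨ X ω = 1) (hXm : AEMeasurable X μ) : Integrable X μ :=
  .of_bound hXm.aestronglyMeasurable 1 <| ae_of_all _ fun ω => by
    rcases hX ω with h | h <;> simp [h]

theorem aemeasurable_of_indepFun_of_aemeasurable_mul [IsProbabilityMeasure μ]
    {G D : Ω → ℝ} (hG : ∀ ω, G ω = 0 ∨ G ω = 1) (hind : IndepFun G D μ)
    (hD : AEMeasurable D μ) (hDG : AEMeasurable (fun ω => D ω * G ω) μ) (hD0 : ¬ D =ᵐ[μ] 0) :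
    AEMeasurable G μ := by
  set A := G ⁻¹' {1}
  set S := D ⁻¹' {0}ᶜ
  have hS0 : μ S ≠ 0 := fun h => hD0 (ae_iff.2 h)
  have hAS : NullMeasurableSet (A ∩ S) μ := by
    have : A ∩ S = (fun ω => D ω * G ω / D ω) ⁻¹' {1} := by
      ext ω
      by_cases hd : D ω = 0 <;> rcases hG ω with h | h <;> simp [A, S, h, hd]
    rw [this]
    exact (hDG.div hD).nullMeasurable (measurableSet_singleton 1)
  have hsplit : μ (A ∩ S) + μ (Aᶜ ∩ S) = μ S := by
    convert measure_inter_add_sdiff₀ S hAS using 3 <;> ext ω <;> simp [and_comm]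
  have hA : μ A + μ Aᶜ = 1 := by
    have hindA : μ (A ∩ S) = μ A * μ S := hind.measure_inter_preimage_eq_mul _ _
      (measurableSet_singleton 1) (measurableSet_singleton 0).compl
    have hindAc : μ (Aᶜ ∩ S) = μ Aᶜ * μ S := hind.measure_inter_preimage_eq_mul _ _
      (measurableSet_singleton 1).compl (measurableSet_singleton 0).compl
    rw [hindA, hindAc, ← add_mul] at hsplit
    exact (ENNReal.mul_eq_right hS0 (measure_ne_top μ S)).1 hsplit
  have hGA : G = A.indicator fun _ => 1 := by
    funext ω
    rcases hG ω with h | h <;> simp [A, h]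
  rw [hGA, aemeasurable_indicator_const_iff]
  exact nullMeasurableSet_of_measure_add_measure_compl (by rw [hA, measure_univ])

theorem MeasureTheory.Integrable.sub_mul_of_mul_add_mul_one_sub {Y1 Y0 X : Ω → ℝ}
    (hY : Integrable (fun ω => Y1 ω * X ω + Y0 ω * (1 - X ω)) μ) (hY0 : Integrable Y0 μ) :
    Integrable (fun ω => (Y1 ω - Y0 ω) * X ω) μ :=
  (hY.sub hY0).congr <| ae_of_all _ fun ω => by simp only [Pi.sub_apply]; ring

theorem integral_mul_add_mul_one_sub {Y1 Y0 X : Ω → ℝ} (hY0 : Integrable Y0 μ)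
    (hY : Integrable (fun ω => Y1 ω * X ω + Y0 ω * (1 - X ω)) μ) :
    ∫ ω, (Y1 ω * X ω + Y0 ω * (1 - X ω)) ∂μ
      = ∫ ω, Y0 ω ∂μ + ∫ ω, (Y1 ω - Y0 ω) * X ω ∂μ := by
  rw [← integral_add hY0 (hY.sub_mul_of_mul_add_mul_one_sub hY0)]
  congr 1 with ω
  ring

theorem identDistrib_of_indepFun_of_map_eq [IsProbabilityMeasure μ] {G M D : Ω → ℝ}
    (hG : ∀ ω, G ω = 0 ∨ G ω = 1) (hind : IndepFun G D μ) (hD : AEMeasurable D μ)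
    (hDG : AEMeasurable (fun ω => D ω * G ω) μ) (hD0 : ¬ D =ᵐ[μ] 0)
    (hmap : Measure.map G μ = Measure.map M μ) : IdentDistrib G M μ μ := by
  have hGm := aemeasurable_of_indepFun_of_aemeasurable_mul hG hind hD hDG hD0
  exact ⟨hGm, .of_map_ne_zero (hmap ▸ (Measure.map_ne_zero_iff hGm).2 (NeZero.ne μ)), hmap⟩

theorem ProbabilityTheory.IdentDistrib.integral_mul_eq_mul_integral_of_indepFun {G M D : Ω → ℝ}
    (hGM : IdentDistrib G M μ μ) (hind : IndepFun G D μ) (hD : AEMeasurable D μ) :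
    ∫ ω, D ω * G ω ∂μ = (∫ ω, D ω ∂μ) * ∫ ω, M ω ∂μ := by
  rw [hind.symm.integral_fun_mul_eq_mul_integral hD.aestronglyMeasurable
    hGM.aemeasurable_fst.aestronglyMeasurable, hGM.integral_eq]

end

theorem stmt1_general {Ω : Type*} [MeasurableSpace Ω] (μ : Measure Ω) [IsProbabilityMeasure μ]
    (M1 M0 G1 G0 Y11 Y10 : Ω → ℝ)
    (hM1 : ∀ ω, M1 ω = 0 ∨ M1 ω = 1) (hM0 : ∀ ω, M0 ω = 0 ∨ M0 ω = 1)
    (hG1 : ∀ ω, G1 ω = 0 ∨ G1 ω = 1) (hG0 : ∀ ω, G0 ω = 0 ∨ G0 ω = 1)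
    (hdist1 : Measure.map G1 μ = Measure.map M1 μ)
    (hdist0 : Measure.map G0 μ = Measure.map M0 μ)
    (hindep : IndepFun (fun ω => (G1 ω, G0 ω)) (fun ω => (Y11 ω, Y10 ω)) μ)
    (hY11 : Integrable Y11 μ) (hY10 : Integrable Y10 μ)
    (hIM1 : Integrable (fun ω => Y11 ω * M1 ω + Y10 ω * (1 - M1 ω)) μ)
    (hIM0 : Integrable (fun ω => Y11 ω * M0 ω + Y10 ω * (1 - M0 ω)) μ)
    (hIG1 : Integrable (fun ω => Y11 ω * G1 ω + Y10 ω * (1 - G1 ω)) μ)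
    (hIG0 : Integrable (fun ω => Y11 ω * G0 ω + Y10 ω * (1 - G0 ω)) μ) :
    ((∫ ω, (Y11 ω * M1 ω + Y10 ω * (1 - M1 ω)) ∂μ)
        - ∫ ω, (Y11 ω * M0 ω + Y10 ω * (1 - M0 ω)) ∂μ)
      - ((∫ ω, (Y11 ω * G1 ω + Y10 ω * (1 - G1 ω)) ∂μ)
        - ∫ ω, (Y11 ω * G0 ω + Y10 ω * (1 - G0 ω)) ∂μ)
    = (∫ ω, (M1 ω - M0 ω) * (Y11 ω - Y10 ω) ∂μ)
      - (∫ ω, (M1 ω - M0 ω) ∂μ) * ∫ ω, (Y11 ω - Y10 ω) ∂μ := by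
  have hDM1 := hIM1.sub_mul_of_mul_add_mul_one_sub hY10
  have hDM0 := hIM0.sub_mul_of_mul_add_mul_one_sub hY10
  have hcov : ∫ ω, (M1 ω - M0 ω) * (Y11 ω - Y10 ω) ∂μ
      = ∫ ω, (Y11 ω - Y10 ω) * M1 ω ∂μ - ∫ ω, (Y11 ω - Y10 ω) * M0 ω ∂μ := by
    rw [← integral_sub hDM1 hDM0]
    congr 1 with ω
    ring
  rw [integral_mul_add_mul_one_sub hY10 hIM1, integral_mul_add_mul_one_sub hY10 hIM0,
    integral_mul_add_mul_one_sub hY10 hIG1, integral_mul_add_mul_one_sub hY10 hIG0, hcov]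
  by_cases hD0 : (fun ω => Y11 ω - Y10 ω) =ᵐ[μ] 0
  · have hvanish (X : Ω → ℝ) : ∫ ω, (Y11 ω - Y10 ω) * X ω ∂μ = 0 :=
      integral_eq_zero_of_ae (hD0.mono fun ω h => by simp [h])
    simp only [hvanish, integral_eq_zero_of_ae hD0]
    ring
  have hD := (hY11.sub hY10).aemeasurable
  have hind1 : IndepFun G1 (fun ω => Y11 ω - Y10 ω) μ :=
    hindep.comp measurable_fst (measurable_fst.sub measurable_snd)
  have hind0 : IndepFun G0 (fun ω => Y11 ω - Y10 ω) μ :=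
    hindep.comp measurable_snd (measurable_fst.sub measurable_snd)
  have hGM1 := identDistrib_of_indepFun_of_map_eq hG1 hind1 hD
    (hIG1.sub_mul_of_mul_add_mul_one_sub hY10).aemeasurable hD0 hdist1
  have hGM0 := identDistrib_of_indepFun_of_map_eq hG0 hind0 hD
    (hIG0.sub_mul_of_mul_add_mul_one_sub hY10).aemeasurable hD0 hdist0
  rw [hGM1.integral_mul_eq_mul_integral_of_indepFun hind1 hD,
    hGM0.integral_mul_eq_mul_integral_of_indepFun hind0 hD,
    integral_sub (integrable_of_forall_eq_zero_or_eq_one hM1 hGM1.aemeasurable_snd)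
      (integrable_of_forall_eq_zero_or_eq_one hM0 hGM0.aemeasurable_snd)]
  ring

/-- NIE − NIE^R = Cov(M₁ − M₀, Y₁₁ − Y₁₀). -/
theorem stmt1 {Ω : Type*} [MeasurableSpace Ω] (μ : Measure Ω) [IsProbabilityMeasure μ]
    (M1 M0 G1 G0 Y11 Y10 : Ω → ℝ)
    (hM1 : ∀ ω, M1 ω = 0 ∨ M1 ω = 1) (hM0 : ∀ ω, M0 ω = 0 ∨ M0 ω = 1)
    (hG1 : ∀ ω, G1 ω = 0 ∨ G1 ω = 1) (hG0 : ∀ ω, G0 ω = 0 ∨ G0 ω = 1)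
    (hdist1 : Measure.map G1 μ = Measure.map M1 μ)
    (hdist0 : Measure.map G0 μ = Measure.map M0 μ)
    (hindep : IndepFun (fun ω => (G1 ω, G0 ω)) (fun ω => (Y11 ω, Y10 ω)) μ)
    (hY11 : Integrable Y11 μ) (hY10 : Integrable Y10 μ)
    (hIM1 : Integrable (fun ω => Y11 ω * M1 ω + Y10 ω * (1 - M1 ω)) μ)
    (hIM0 : Integrable (fun ω => Y11 ω * M0 ω + Y10 ω * (1 - M0 ω)) μ)
    (hIG1 : Integrable (fun ω => Y11 ω * G1 ω + Y10 ω * (1 - G1 ω)) μ)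
    (hIG0 : Integrable (fun ω => Y11 ω * G0 ω + Y10 ω * (1 - G0 ω)) μ)
    (hcov : Integrable (fun ω => (M1 ω - M0 ω) * (Y11 ω - Y10 ω)) μ) :
    ((∫ ω, (Y11 ω * M1 ω + Y10 ω * (1 - M1 ω)) ∂μ)
        - ∫ ω, (Y11 ω * M0 ω + Y10 ω * (1 - M0 ω)) ∂μ)
      - ((∫ ω, (Y11 ω * G1 ω + Y10 ω * (1 - G1 ω)) ∂μ)
        - ∫ ω, (Y11 ω * G0 ω + Y10 ω * (1 - G0 ω)) ∂μ)
    = (∫ ω, (M1 ω - M0 ω) * (Y11 ω - Y10 ω) ∂μ)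
      - (∫ ω, (M1 ω - M0 ω) ∂μ) * ∫ ω, (Y11 ω - Y10 ω) ∂μ :=
  stmt1_general μ M1 M0 G1 G0 Y11 Y10 hM1 hM0 hG1 hG0 hdist1 hdist0 hindep hY11 hY10 hIM1 hIM0 hIG1
    hIG0
end

section
/- Let M₀ be a {0,1}-valued random variable and Y_{1,1}, Y_{1,0}, Y_{0,1}, Y_{0,0} integrable random variables on a common probability space. Let G₀ have the same distribution as M₀ and be independent of (Y_{1,1}, Y_{1,0}, Y_{0,1}, Y_{0,0}). Define Y_{a,X} := Y_{a,1}·X + Y_{a,0}·(1−X). Then E[Y_{1,M₀} − Y_{0,M₀}] − E[Y_{1,G₀} − Y_{0,G₀}] = Cov(M₀, Y_{1,1} − Y_{1,0} − Y_{0,1} + Y_{0,0}). -/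
/-!
With `Δ = Y₁₁ - Y₁₀ - Y₀₁ + Y₀₀`, the effect of treatment at mediator value `X` is
`Y_{1,X} - Y_{0,X} = X Δ + (Y₁₀ - Y₀₀)`, so the difference of the two direct effects is
`E[M₀ Δ] - E[G₀ Δ]`. Independence gives `E[G₀ Δ] = E[G₀] E[Δ]`, and `E[G₀] = E[M₀]` because the
laws agree. When `G₀` is not a.e.-measurable this product formula still holds: a `{0,1}`-valued
`G₀` independent of `Δ` with `G₀ Δ` a.e.-measurable then forces `Δ = 0` a.e.
-/

open MeasureTheory ProbabilityTheory

namespace MeasureTheory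

open Set

variable {Ω : Type*} [MeasurableSpace Ω] {μ : Measure Ω}

theorem nullMeasurableSet_of_measure_add_measure_compl [IsFiniteMeasure μ] {s : Set Ω}
    (h : μ s + μ sᶜ = μ univ) : NullMeasurableSet s μ := by
  set v := toMeasurable μ s
  set u := toMeasurable μ sᶜ
  have hvu : v ∪ u = univ :=
    univ_subset_iff.1 (union_compl_self s ▸
      union_subset_union (subset_toMeasurable μ s) (subset_toMeasurable μ sᶜ))
  have hnull : μ (v ∩ u) = 0 := by
    have := measure_union_add_inter (μ := μ) v (measurableSet_toMeasurable μ sᶜ)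
    rw [hvu, measure_toMeasurable, measure_toMeasurable, h] at this
    exact (ENNReal.add_right_inj (measure_ne_top μ univ)).1 (this.trans (add_zero _).symm)
  have hs : s = uᶜ ∪ (s ∩ u) := by
    rw [union_inter_distrib_left, compl_union_self, inter_univ,
      union_eq_right.2 (compl_subset_comm.1 (subset_toMeasurable μ sᶜ))]
  rw [hs]
  exact (measurableSet_toMeasurable μ sᶜ).compl.nullMeasurableSet.union
    (.of_null (measure_mono_null (inter_subset_inter_left u (subset_toMeasurable μ s)) hnull))

theorem nullMeasurableSet_of_measure_inter_eq_mul [IsProbabilityMeasure μ] {s t : Set Ω}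
    (hs : μ (s ∩ t) = μ s * μ t) (hsc : μ (sᶜ ∩ t) = μ sᶜ * μ t)
    (hst : NullMeasurableSet (s ∩ t) μ) (ht : μ t ≠ 0) : NullMeasurableSet s μ := by
  refine nullMeasurableSet_of_measure_add_measure_compl ?_
  have hsplit : μ (s ∩ t) + μ (sᶜ ∩ t) = μ t := by
    rw [← measure_inter_add_sdiff₀ t hst, inter_eq_right.2 inter_subset_right,
      sdiff_inter_self_eq_sdiff, sdiff_eq_compl_inter]
  rw [measure_univ, ← ENNReal.mul_left_inj ht (measure_ne_top μ t), one_mul, add_mul, ← hs, ← hsc,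
    hsplit]

theorem integral_eq_integral_id_map (X : Ω → ℝ) : ∫ ω, X ω ∂μ = ∫ x, x ∂μ.map X := by
  by_cases hX : AEMeasurable X μ
  · exact (integral_map hX aestronglyMeasurable_id).symm
  · rw [Measure.map_of_not_aemeasurable hX, integral_zero_measure,
      integral_non_aestronglyMeasurable (mt AEStronglyMeasurable.aemeasurable hX)]

end MeasureTheory

namespace ProbabilityTheory

variable {Ω : Type*} [MeasurableSpace Ω] {μ : Measure Ω} [IsProbabilityMeasure μ] {G D : Ω → ℝ}

/-- On `{D ≠ 0}` the event `{G = 1}` coincides with `{G D ≠ 0}`, hence is null-measurable there,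
and independence spreads this to the whole space. -/
theorem IndepFun.ae_eq_zero_of_not_aemeasurable (hG : ∀ ω, G ω = 0 ∨ G ω = 1)
    (hGD : IndepFun G D μ) (hGm : ¬ AEMeasurable G μ)
    (hGDm : AEStronglyMeasurable (fun ω => G ω * D ω) μ) : D =ᵐ[μ] 0 := by
  by_contra hD
  have ht : μ (D ⁻¹' {0}ᶜ) ≠ 0 := fun h0 => hD (ae_iff.2 h0)
  have hst : G ⁻¹' {1} ∩ D ⁻¹' {0}ᶜ = (fun ω => G ω * D ω) ⁻¹' {0}ᶜ := by
    ext ω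
    rcases hG ω with h | h <;> simp [h]
  have hs : NullMeasurableSet (G ⁻¹' {1}) μ :=
    nullMeasurableSet_of_measure_inter_eq_mul
      (hGD.measure_inter_preimage_eq_mul _ _ (measurableSet_singleton 1)
        (measurableSet_singleton 0).compl)
      (hGD.measure_inter_preimage_eq_mul _ _ (measurableSet_singleton 1).compl
        (measurableSet_singleton 0).compl)
      (hst ▸ hGDm.aemeasurable.nullMeasurable (measurableSet_singleton 0).compl) ht
  refine hGm (((aemeasurable_indicator_const_iff (1 : ℝ)).2 hs).congr (.of_forall fun ω => ?_))
  rcases hG ω with h | h <;> simp [h]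

theorem IndepFun.integral_mul_eq_mul_integral_of_zero_one (hG : ∀ ω, G ω = 0 ∨ G ω = 1)
    (hGD : IndepFun G D μ) (hD : AEStronglyMeasurable D μ)
    (hGDm : AEStronglyMeasurable (fun ω => G ω * D ω) μ) :
    ∫ ω, G ω * D ω ∂μ = (∫ ω, G ω ∂μ) * ∫ ω, D ω ∂μ := by
  by_cases hGm : AEMeasurable G μ
  · exact hGD.integral_fun_mul_eq_mul_integral hGm.aestronglyMeasurable hD
  · have hGD0 : (fun ω => G ω * D ω) =ᵐ[μ] 0 := by
      filter_upwards [hGD.ae_eq_zero_of_not_aemeasurable hG hGm hGDm] with ω h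
      simp [h]
    rw [integral_congr_ae hGD0, integral_non_aestronglyMeasurable
      (mt AEStronglyMeasurable.aemeasurable hGm)]
    simp

end ProbabilityTheory

section PotentialOutcomes

variable {Ω : Type*} [MeasurableSpace Ω] {μ : Measure Ω} {X Y11 Y10 Y01 Y00 : Ω → ℝ}

theorem integrable_mul_interaction
    (hI1 : Integrable (fun ω => Y11 ω * X ω + Y10 ω * (1 - X ω)) μ)
    (hI0 : Integrable (fun ω => Y01 ω * X ω + Y00 ω * (1 - X ω)) μ)
    (hY10 : Integrable Y10 μ) (hY00 : Integrable Y00 μ) :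
    Integrable (fun ω => X ω * (Y11 ω - Y10 ω - Y01 ω + Y00 ω)) μ :=
  ((hI1.sub hI0).sub (hY10.sub hY00)).congr (.of_forall fun ω => by simp only [Pi.sub_apply]; ring)

theorem integral_sub_integral_eq_integral_mul_interaction_add
    (hI1 : Integrable (fun ω => Y11 ω * X ω + Y10 ω * (1 - X ω)) μ)
    (hI0 : Integrable (fun ω => Y01 ω * X ω + Y00 ω * (1 - X ω)) μ)
    (hY10 : Integrable Y10 μ) (hY00 : Integrable Y00 μ) :
    (∫ ω, (Y11 ω * X ω + Y10 ω * (1 - X ω)) ∂μ) - ∫ ω, (Y01 ω * X ω + Y00 ω * (1 - X ω)) ∂μ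
      = (∫ ω, X ω * (Y11 ω - Y10 ω - Y01 ω + Y00 ω) ∂μ) + ((∫ ω, Y10 ω ∂μ) - ∫ ω, Y00 ω ∂μ) := by
  rw [← integral_sub hI1 hI0, ← integral_sub hY10 hY00,
    ← integral_add (integrable_mul_interaction hI1 hI0 hY10 hY00)
      (show Integrable (fun ω => Y10 ω - Y00 ω) μ from hY10.sub hY00)]
  congr 1 with ω
  ring

end PotentialOutcomes

theorem stmt2_general {Ω : Type*} [MeasurableSpace Ω] (μ : Measure Ω) [IsProbabilityMeasure μ]
    (M0 G0 Y11 Y10 Y01 Y00 : Ω → ℝ)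
    (hG0 : ∀ ω, G0 ω = 0 ∨ G0 ω = 1)
    (hdist0 : Measure.map G0 μ = Measure.map M0 μ)
    (hindep : IndepFun G0 (fun ω => (Y11 ω, Y10 ω, Y01 ω, Y00 ω)) μ)
    (hY11 : Integrable Y11 μ) (hY10 : Integrable Y10 μ)
    (hY01 : Integrable Y01 μ) (hY00 : Integrable Y00 μ)
    (hI1M : Integrable (fun ω => Y11 ω * M0 ω + Y10 ω * (1 - M0 ω)) μ)
    (hI0M : Integrable (fun ω => Y01 ω * M0 ω + Y00 ω * (1 - M0 ω)) μ)
    (hI1G : Integrable (fun ω => Y11 ω * G0 ω + Y10 ω * (1 - G0 ω)) μ)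
    (hI0G : Integrable (fun ω => Y01 ω * G0 ω + Y00 ω * (1 - G0 ω)) μ) :
    ((∫ ω, (Y11 ω * M0 ω + Y10 ω * (1 - M0 ω)) ∂μ)
        - ∫ ω, (Y01 ω * M0 ω + Y00 ω * (1 - M0 ω)) ∂μ)
      - ((∫ ω, (Y11 ω * G0 ω + Y10 ω * (1 - G0 ω)) ∂μ)
        - ∫ ω, (Y01 ω * G0 ω + Y00 ω * (1 - G0 ω)) ∂μ)
    = (∫ ω, M0 ω * (Y11 ω - Y10 ω - Y01 ω + Y00 ω) ∂μ)
      - (∫ ω, M0 ω ∂μ) * ∫ ω, (Y11 ω - Y10 ω - Y01 ω + Y00 ω) ∂μ := by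
  have hΔ : Integrable (fun ω => Y11 ω - Y10 ω - Y01 ω + Y00 ω) μ :=
    ((hY11.sub hY10).sub hY01).add hY00
  have hindΔ : IndepFun G0 (fun ω => Y11 ω - Y10 ω - Y01 ω + Y00 ω) μ :=
    hindep.comp (ψ := fun y : ℝ × ℝ × ℝ × ℝ => y.1 - y.2.1 - y.2.2.1 + y.2.2.2) measurable_id
      (by fun_prop)
  have hGΔ : ∫ ω, G0 ω * (Y11 ω - Y10 ω - Y01 ω + Y00 ω) ∂μ
      = (∫ ω, M0 ω ∂μ) * ∫ ω, (Y11 ω - Y10 ω - Y01 ω + Y00 ω) ∂μ := by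
    rw [hindΔ.integral_mul_eq_mul_integral_of_zero_one hG0 hΔ.aestronglyMeasurable
        (integrable_mul_interaction hI1G hI0G hY10 hY00).aestronglyMeasurable,
      integral_eq_integral_id_map G0, integral_eq_integral_id_map M0, hdist0]
  rw [integral_sub_integral_eq_integral_mul_interaction_add hI1M hI0M hY10 hY00,
    integral_sub_integral_eq_integral_mul_interaction_add hI1G hI0G hY10 hY00, hGΔ]
  ring

/-- NDE − NDE^R = Cov(M₀, Y₁₁ − Y₁₀ − Y₀₁ + Y₀₀). -/
theorem stmt2 {Ω : Type*} [MeasurableSpace Ω] (μ : Measure Ω) [IsProbabilityMeasure μ]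
    (M0 G0 Y11 Y10 Y01 Y00 : Ω → ℝ)
    (hM0 : ∀ ω, M0 ω = 0 ∨ M0 ω = 1) (hG0 : ∀ ω, G0 ω = 0 ∨ G0 ω = 1)
    (hdist0 : Measure.map G0 μ = Measure.map M0 μ)
    (hindep : IndepFun G0 (fun ω => (Y11 ω, Y10 ω, Y01 ω, Y00 ω)) μ)
    (hY11 : Integrable Y11 μ) (hY10 : Integrable Y10 μ)
    (hY01 : Integrable Y01 μ) (hY00 : Integrable Y00 μ)
    (hI1M : Integrable (fun ω => Y11 ω * M0 ω + Y10 ω * (1 - M0 ω)) μ)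
    (hI0M : Integrable (fun ω => Y01 ω * M0 ω + Y00 ω * (1 - M0 ω)) μ)
    (hI1G : Integrable (fun ω => Y11 ω * G0 ω + Y10 ω * (1 - G0 ω)) μ)
    (hI0G : Integrable (fun ω => Y01 ω * G0 ω + Y00 ω * (1 - G0 ω)) μ)
    (hcov : Integrable (fun ω => M0 ω * (Y11 ω - Y10 ω - Y01 ω + Y00 ω)) μ) :
    ((∫ ω, (Y11 ω * M0 ω + Y10 ω * (1 - M0 ω)) ∂μ)
        - ∫ ω, (Y01 ω * M0 ω + Y00 ω * (1 - M0 ω)) ∂μ)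
      - ((∫ ω, (Y11 ω * G0 ω + Y10 ω * (1 - G0 ω)) ∂μ)
        - ∫ ω, (Y01 ω * G0 ω + Y00 ω * (1 - G0 ω)) ∂μ)
    = (∫ ω, M0 ω * (Y11 ω - Y10 ω - Y01 ω + Y00 ω) ∂μ)
      - (∫ ω, M0 ω ∂μ) * ∫ ω, (Y11 ω - Y10 ω - Y01 ω + Y00 ω) ∂μ :=
  stmt2_general μ M0 G0 Y11 Y10 Y01 Y00 hG0 hdist0 hindep hY11 hY10 hY01 hY00 hI1M hI0M hI1G hI0G
end

section
/- There exists a probability space and random variables M₁, M₀ taking values in {0,1} and Y_{1,1}, Y_{1,0} such that almost surely (M₁−M₀)(Y_{1,1}−Y_{1,0}) = 0 (the sharper mediation null holds), yet E[M₁−M₀]·E[Y_{1,1}−Y_{1,0}] = 1/4 ≠ 0. Concretely, on a two-point space with equal mass: on one point M₁−M₀ = 1 and Y_{1,1}−Y_{1,0} = 0; on the other M₁−M₀ = 0 and Y_{1,1}−Y_{1,0} = 1. -/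
/-! On a fair coin, let the mediator respond to treatment only on heads and the outcome respond
to the mediator only on tails. The product `(M₁ - M₀)(Y₁₁ - Y₁₀)` then vanishes pointwise, while
each factor has mean `1/2`, so the product of the means is `1/4`. -/

open MeasureTheory

theorem PMF.integral_uniformOfFintype {α E : Type*} [Fintype α] [Nonempty α] [MeasurableSpace α]
    [MeasurableSingletonClass α] [NormedAddCommGroup E] [NormedSpace ℝ E] [CompleteSpace E]
    (f : α → E) :
    ∫ a, f a ∂(PMF.uniformOfFintype α).toMeasure = (Fintype.card α : ℝ)⁻¹ • ∑ a, f a := by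
  simp [PMF.integral_eq_sum, Finset.smul_sum]

theorem integral_fairCoin (f : Bool → ℝ) :
    ∫ b, f b ∂(PMF.uniformOfFintype Bool).toMeasure = (f true + f false) / 2 := by
  rw [PMF.integral_uniformOfFintype]
  simp [div_eq_inv_mul]

/-- The NIE^R violates the sharper mediation null: there are random
variables satisfying the sharper null with E[M₁−M₀]·E[Y₁₁−Y₁₀] = 1/4 ≠ 0. -/
theorem stmt6 :
    ∃ (Ω : Type) (_ : MeasurableSpace Ω) (μ : Measure Ω) (_ : IsProbabilityMeasure μ)
      (M1 M0 Y11 Y10 : Ω → ℝ),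
      (∀ ω, M1 ω = 0 ∨ M1 ω = 1) ∧ (∀ ω, M0 ω = 0 ∨ M0 ω = 1) ∧
      (∀ᵐ ω ∂μ, (M1 ω - M0 ω) * (Y11 ω - Y10 ω) = 0) ∧
      (∫ ω, (M1 ω - M0 ω) ∂μ) * (∫ ω, (Y11 ω - Y10 ω) ∂μ) = 1/4 ∧
      (1:ℝ)/4 ≠ 0 := by
  refine ⟨Bool, inferInstance, (PMF.uniformOfFintype Bool).toMeasure, inferInstance,
    fun b => cond b 1 0, 0, fun b => cond b 0 1, 0,
    fun b => by cases b <;> simp, fun _ => Or.inl rfl,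
    ae_of_all _ fun b => by cases b <;> simp, ?_, by norm_num⟩
  rw [integral_fairCoin, integral_fairCoin]
  norm_num
end

section
/- Let C be a random variable (baseline confounder), M₁, M₀ random variables with finite support 𝓜, and {Y_{1,m}}_{m∈𝓜} integrable random variables. Then E[Y_{1,M₁}] − E[Y_{1,M₀}] − Σ_{m∈𝓜} E[ E[𝟙(M₁=m)−𝟙(M₀=m) | C] · E[Y_{1,m} | C] ] = Σ_{m∈𝓜} E[ Cov(𝟙(M₁=m)−𝟙(M₀=m), Y_{1,m} | C) ], where Y_{1,M_a} := Σ_{m∈𝓜} 𝟙(M_a = m)·Y_{1,m} and Cov(·,·|C) denotes conditional covariance given C. -/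
open MeasureTheory

/-- The σ-algebra generated by the baseline covariate `C`. -/
def sigmaGen {Ω : Type*} (C : Ω → ℝ) : MeasurableSpace Ω :=
  MeasurableSpace.comap C inferInstance

/-- Conditional expectation given `C`: `E[f | C]`. -/
noncomputable def condE {Ω : Type*} [MeasurableSpace Ω] (μ : Measure Ω) (C : Ω → ℝ)
    (f : Ω → ℝ) : Ω → ℝ :=
  μ[f | sigmaGen C]

/-- Conditional covariance given `C`: `Cov(f, g | C) = E[fg|C] − E[f|C]E[g|C]`. -/
noncomputable def condCov {Ω : Type*} [MeasurableSpace Ω] (μ : Measure Ω) (C : Ω → ℝ)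
    (f g : Ω → ℝ) : Ω → ℝ :=
  fun ω => condE μ C (fun ω' => f ω' * g ω') ω - condE μ C f ω * condE μ C g ω

/-- Indicator `𝟙(X = m)` as a real-valued random variable. -/
noncomputable def ind {Ω : Type*} (X : Ω → ℝ) (m : ℝ) : Ω → ℝ :=
  fun ω => if X ω = m then 1 else 0

/-!
Summing over `m` splits both sides into per-mediator-value terms. For each `m`, with
`D = 𝟙(M₁=m) − 𝟙(M₀=m)`, the tower property gives `E[D·Y_{1,m}] = E[E[D·Y_{1,m} | C]]`, so
`E[D·Y_{1,m}] − E[E[D|C]·E[Y_{1,m}|C]]` is the expectation of `Cov(D, Y_{1,m} | C)`.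
Integrability holds because indicators, and hence their conditional expectations, are bounded.
-/

theorem abs_ind_le_one {Ω : Type*} (X : Ω → ℝ) (m : ℝ) (ω : Ω) : |ind X m ω| ≤ 1 := by
  unfold ind
  split_ifs <;> norm_num

theorem abs_ind_sub_ind_le_one {Ω : Type*} (X X' : Ω → ℝ) (m : ℝ) (ω : Ω) :
    |ind X m ω - ind X' m ω| ≤ 1 := by
  unfold ind
  split_ifs <;> norm_num

theorem integrable_condExp_mul_condExp_of_ae_bdd {Ω : Type*} {m m₀ : MeasurableSpace Ω}
    {μ : Measure Ω} {f g : Ω → ℝ} {R : ℝ} (hf : ∀ᵐ ω ∂μ, |f ω| ≤ R) :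
    Integrable (fun ω => μ[f | m] ω * μ[g | m] ω) μ :=
  integrable_condExp.bdd_mul integrable_condExp.aestronglyMeasurable
    (by simpa only [Real.norm_eq_abs] using ae_bdd_abs_condExp_of_ae_bdd_abs hf)

section Mediation

variable {Ω : Type*} [MeasurableSpace Ω] {μ : Measure Ω}

theorem integral_condCov [IsFiniteMeasure μ] {C : Ω → ℝ} (hC : Measurable C) {f g : Ω → ℝ}
    (hprod : Integrable (fun ω => condE μ C f ω * condE μ C g ω) μ) :
    ∫ ω, condCov μ C f g ω ∂μ
      = ∫ ω, f ω * g ω ∂μ - ∫ ω, condE μ C f ω * condE μ C g ω ∂μ := by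
  have hle : sigmaGen C ≤ ‹MeasurableSpace Ω› := hC.comap_le
  unfold condCov
  rw [integral_sub (f := condE μ C fun ω => f ω * g ω) integrable_condExp hprod, condE,
    integral_condExp hle]

theorem measurable_ind {X : Ω → ℝ} (hX : Measurable X) (m : ℝ) : Measurable (ind X m) :=
  Measurable.ite (hX (measurableSet_singleton m)) measurable_const measurable_const

theorem MeasureTheory.Integrable.ind_mul {X g : Ω → ℝ} (hX : Measurable X) (hg : Integrable g μ)
    (m : ℝ) :
    Integrable (fun ω => ind X m ω * g ω) μ :=
  hg.bdd_mul (measurable_ind hX m).aestronglyMeasurable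
    (.of_forall fun ω => by simpa only [Real.norm_eq_abs] using abs_ind_le_one X m ω)

end Mediation

theorem stmt7_general {Ω : Type*} [MeasurableSpace Ω] (μ : Measure Ω) [IsProbabilityMeasure μ]
    (C : Ω → ℝ) (hC : Measurable C)
    (𝓜 : Finset ℝ) (M1 M0 : Ω → ℝ)
    (hM1meas : Measurable M1) (hM0meas : Measurable M0)
    (Y : ℝ → Ω → ℝ) (hY : ∀ m ∈ 𝓜, Integrable (Y m) μ) :
    (∫ ω, ∑ m ∈ 𝓜, ind M1 m ω * Y m ω ∂μ)
      - (∫ ω, ∑ m ∈ 𝓜, ind M0 m ω * Y m ω ∂μ)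
      - ∑ m ∈ 𝓜, ∫ ω, (condE μ C (fun ω' => ind M1 m ω' - ind M0 m ω') ω
            * condE μ C (Y m) ω) ∂μ
    = ∑ m ∈ 𝓜, ∫ ω, condCov μ C (fun ω' => ind M1 m ω' - ind M0 m ω') (Y m) ω ∂μ := by
  rw [integral_finsetSum 𝓜 fun m hm => (hY m hm).ind_mul hM1meas m,
    integral_finsetSum 𝓜 fun m hm => (hY m hm).ind_mul hM0meas m,
    ← Finset.sum_sub_distrib, ← Finset.sum_sub_distrib]
  refine Finset.sum_congr rfl fun m hm => ?_
  have hD_bdd : ∀ᵐ ω ∂μ, |ind M1 m ω - ind M0 m ω| ≤ 1 :=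
    .of_forall (abs_ind_sub_ind_le_one M1 M0 m)
  rw [integral_condCov hC (integrable_condExp_mul_condExp_of_ae_bdd hD_bdd),
    ← integral_sub ((hY m hm).ind_mul hM1meas m) ((hY m hm).ind_mul hM0meas m)]
  simp only [sub_mul]

/-- Proposition 2, NIE part, finite mediator support:
NIE − NIE^R = Σ_m E[Cov(𝟙(M₁=m)−𝟙(M₀=m), Y_{1,m} | C)]. -/
theorem stmt7 {Ω : Type*} [MeasurableSpace Ω] (μ : Measure Ω) [IsProbabilityMeasure μ]
    (C : Ω → ℝ) (hC : Measurable C)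
    (𝓜 : Finset ℝ) (M1 M0 : Ω → ℝ)
    (hM1 : ∀ ω, M1 ω ∈ 𝓜) (hM0 : ∀ ω, M0 ω ∈ 𝓜)
    (hM1meas : Measurable M1) (hM0meas : Measurable M0)
    (Y : ℝ → Ω → ℝ) (hY : ∀ m ∈ 𝓜, Integrable (Y m) μ) :
    (∫ ω, ∑ m ∈ 𝓜, ind M1 m ω * Y m ω ∂μ)
      - (∫ ω, ∑ m ∈ 𝓜, ind M0 m ω * Y m ω ∂μ)
      - ∑ m ∈ 𝓜, ∫ ω, (condE μ C (fun ω' => ind M1 m ω' - ind M0 m ω') ω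
            * condE μ C (Y m) ω) ∂μ
    = ∑ m ∈ 𝓜, ∫ ω, condCov μ C (fun ω' => ind M1 m ω' - ind M0 m ω') (Y m) ω ∂μ :=
  stmt7_general μ C hC 𝓜 M1 M0 hM1meas hM0meas Y hY
end

section
/- Under the linear structural equations Y_{a,m} = γ₀ + γ₁a + γ₂L_a + γ₃m + γ₄aL_a + γ₅am + γ₆L_a·m + γ₇aL_a·m + ε_Y, L_a = α₀ + α₁a + ε_L, M_{a'} = β₀ + β₁a' + β₂L_{a'} + β₃a'L_{a'} + ε_M, with all Greek-letter coefficients constants and square-integrable errors, and with G_{a'} an independent copy of M_{a'} (independent of (ε_L, ε_Y)): NIE − NIE^R = (γ₆ + γ₇)·β₃·Var(ε_L), where NIE = E[Y_{1,M₁} − Y_{1,M₀}] and NIE^R = E[Y_{1,G₁} − Y_{1,G₀}]. -/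
/-!
Writing `Y 1 X = A + B * X` with the random slope `B = γ₃ + γ₅ + (γ₆ + γ₇) L₁`, both effects are
expectations of `B` times a mediator contrast. The natural contrast `M₁ - M₀` is an affine function
of `ε_L`, hence correlated with `B`; the independent draws `G` decouple from `B`, so
`E[B (G₁ - G₀)] = E[B] E[M₁ - M₀]`. The difference is therefore `Cov(B, M₁ - M₀)`, which is
`(γ₆ + γ₇) β₃ Var ε_L`.
-/

open MeasureTheory ProbabilityTheory

section

variable {Ω β : Type*} [MeasurableSpace Ω] {μ : Measure Ω}

lemma identDistrib_of_map_eq [MeasurableSpace β] [IsProbabilityMeasure μ] {G M : Ω → β}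
    (hM : AEMeasurable M μ) (h : μ.map G = μ.map M) : IdentDistrib G M μ μ := by
  have : IsProbabilityMeasure (μ.map M) := Measure.isProbabilityMeasure_map hM
  have hG : AEMeasurable G μ := aemeasurable_of_map_neZero (by rw [h]; infer_instance)
  exact ⟨hG, hM, h⟩

lemma integral_add_mul_sub_integral_add_mul {A B X₁ X₀ : Ω → ℝ}
    (h₁ : Integrable (fun ω => A ω + B ω * X₁ ω) μ)
    (h₀ : Integrable (fun ω => A ω + B ω * X₀ ω) μ) :
    (∫ ω, A ω + B ω * X₁ ω ∂μ) - ∫ ω, A ω + B ω * X₀ ω ∂μ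
      = ∫ ω, B ω * (X₁ ω - X₀ ω) ∂μ := by
  rw [← integral_sub h₁ h₀]
  congr 1 with ω
  ring

lemma integral_affine_mul_affine_sub_mul_integral [IsProbabilityMeasure μ] (a b c d : ℝ)
    {X : Ω → ℝ} (hX : Integrable X μ) (hX2 : Integrable (fun ω => X ω * X ω) μ) :
    (∫ ω, (a + b * X ω) * (c + d * X ω) ∂μ)
        - (∫ ω, a + b * X ω ∂μ) * ∫ ω, c + d * X ω ∂μ
      = b * d * ((∫ ω, X ω * X ω ∂μ) - (∫ ω, X ω ∂μ) ^ 2) := by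
  have hlin : Integrable (fun ω => a * c + (a * d + b * c) * X ω) μ :=
    (integrable_const _).add (hX.const_mul _)
  have haffine : ∀ p q : ℝ, ∫ ω, p + q * X ω ∂μ = p + q * ∫ ω, X ω ∂μ := fun p q => by
    rw [integral_add (integrable_const _) (hX.const_mul _), integral_const_mul]
    simp
  have hexpand : ∀ ω, (a + b * X ω) * (c + d * X ω)
      = (a * c + (a * d + b * c) * X ω) + b * d * (X ω * X ω) := fun ω => by ring
  simp only [hexpand]
  rw [integral_add hlin (hX2.const_mul _), integral_const_mul, haffine, haffine, haffine]
  ring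

end

theorem stmt11_general {Ω : Type*} [MeasurableSpace Ω] (μ : Measure Ω) [IsProbabilityMeasure μ]
    (α0 α1 β0 β1 β2 β3 γ0 γ1 γ2 γ3 γ4 γ5 γ6 γ7 : ℝ)
    (εL εM εY : Ω → ℝ)
    (hεL : Integrable εL μ) (hεM : Integrable εM μ)
    (hεL2 : Integrable (fun ω => εL ω * εL ω) μ)
    (L : ℝ → Ω → ℝ) (M : ℝ → Ω → ℝ) (Y : ℝ → (Ω → ℝ) → Ω → ℝ)
    (hL : ∀ t ω, L t ω = α0 + α1 * t + εL ω)
    (hM : ∀ t ω, M t ω = β0 + β1 * t + β2 * L t ω + β3 * t * L t ω + εM ω)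
    (hY : ∀ t (X : Ω → ℝ) ω, Y t X ω
      = γ0 + γ1 * t + γ2 * L t ω + γ3 * X ω + γ4 * t * L t ω + γ5 * t * X ω
        + γ6 * L t ω * X ω + γ7 * t * L t ω * X ω + εY ω)
    (G1 G0 : Ω → ℝ)
    (hdist1 : Measure.map G1 μ = Measure.map (M 1) μ)
    (hdist0 : Measure.map G0 μ = Measure.map (M 0) μ)
    (hindep : IndepFun (fun ω => (G1 ω, G0 ω)) (fun ω => (εL ω, εY ω)) μ)
    (hI1 : Integrable (Y 1 (M 1)) μ) (hI2 : Integrable (Y 1 (M 0)) μ)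
    (hI3 : Integrable (Y 1 G1) μ) (hI4 : Integrable (Y 1 G0) μ) :
    ((∫ ω, Y 1 (M 1) ω ∂μ) - ∫ ω, Y 1 (M 0) ω ∂μ)
      - ((∫ ω, Y 1 G1 ω ∂μ) - ∫ ω, Y 1 G0 ω ∂μ)
    = (γ6 + γ7) * β3 * ((∫ ω, εL ω * εL ω ∂μ) - (∫ ω, εL ω ∂μ) ^ 2) := by
  set b := γ3 + γ5 + (γ6 + γ7) * (α0 + α1)
  set A : Ω → ℝ := fun ω => γ0 + γ1 + (γ2 + γ4) * L 1 ω + εY ω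
  set B : Ω → ℝ := fun ω => b + (γ6 + γ7) * εL ω
  have hY1 : ∀ X, Y 1 X = fun ω => A ω + B ω * X ω := fun X => funext fun ω => by
    simp only [A, B, b, hY, hL]; ring
  have hMt : ∀ t, M t = fun ω => (β0 + β1 * t + (β2 + β3 * t) * (α0 + α1 * t))
      + (β2 + β3 * t) * εL ω + εM ω := fun t => funext fun ω => by
    simp only [hM, hL]; ring
  have hMint : ∀ t, Integrable (M t) μ := fun t => by
    rw [hMt]; exact ((integrable_const _).add (hεL.const_mul _)).add hεM
  have hΔM : ∀ ω, M 1 ω - M 0 ω = (β1 + β2 * α1 + β3 * (α0 + α1)) + β3 * εL ω := fun ω => by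
    simp only [hMt]; ring
  have hG1 := identDistrib_of_map_eq (hMint 1).aemeasurable hdist1
  have hG0 := identDistrib_of_map_eq (hMint 0).aemeasurable hdist0
  have hindepBG : IndepFun B (fun ω => G1 ω - G0 ω) μ :=
    (hindep.comp (measurable_fst.sub measurable_snd)
      (measurable_const.add (measurable_const.mul measurable_fst))).symm
  rw [hY1] at hI1 hI2 hI3 hI4
  simp only [hY1]
  calc _ = (∫ ω, B ω * (M 1 ω - M 0 ω) ∂μ) - (∫ ω, B ω ∂μ) * ∫ ω, G1 ω - G0 ω ∂μ := by
        rw [integral_add_mul_sub_integral_add_mul hI1 hI2,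
          integral_add_mul_sub_integral_add_mul hI3 hI4,
          hindepBG.integral_fun_mul_eq_mul_integral
            (aestronglyMeasurable_const.add (hεL.1.const_mul _))
            (hG1.aemeasurable_fst.sub hG0.aemeasurable_fst).aestronglyMeasurable]
    _ = (∫ ω, B ω * (M 1 ω - M 0 ω) ∂μ) - (∫ ω, B ω ∂μ) * ∫ ω, M 1 ω - M 0 ω ∂μ := by
        rw [integral_sub ((hG1.integrable_iff).2 (hMint 1)) ((hG0.integrable_iff).2 (hMint 0)),
          integral_sub (hMint 1) (hMint 0), hG1.integral_eq, hG0.integral_eq]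
    _ = _ := by
        simp only [hΔM, B]
        exact integral_affine_mul_affine_sub_mul_integral _ _ _ _ hεL hεL2

/-- Proposition 4, NIE part:
under the linear structural equations, NIE − NIE^R = (γ₆ + γ₇)β₃ Var(ε_L). -/
theorem stmt11 {Ω : Type*} [MeasurableSpace Ω] (μ : Measure Ω) [IsProbabilityMeasure μ]
    (α0 α1 β0 β1 β2 β3 γ0 γ1 γ2 γ3 γ4 γ5 γ6 γ7 : ℝ)
    (εL εM εY : Ω → ℝ)
    (hεL : Integrable εL μ) (hεM : Integrable εM μ) (hεY : Integrable εY μ)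
    (hεL2 : Integrable (fun ω => εL ω * εL ω) μ)
    (hεLM : Integrable (fun ω => εL ω * εM ω) μ)
    (L : ℝ → Ω → ℝ) (M : ℝ → Ω → ℝ) (Y : ℝ → (Ω → ℝ) → Ω → ℝ)
    (hL : ∀ t ω, L t ω = α0 + α1 * t + εL ω)
    (hM : ∀ t ω, M t ω = β0 + β1 * t + β2 * L t ω + β3 * t * L t ω + εM ω)
    (hY : ∀ t (X : Ω → ℝ) ω, Y t X ω
      = γ0 + γ1 * t + γ2 * L t ω + γ3 * X ω + γ4 * t * L t ω + γ5 * t * X ω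
        + γ6 * L t ω * X ω + γ7 * t * L t ω * X ω + εY ω)
    (G1 G0 : Ω → ℝ)
    (hdist1 : Measure.map G1 μ = Measure.map (M 1) μ)
    (hdist0 : Measure.map G0 μ = Measure.map (M 0) μ)
    (hindep : IndepFun (fun ω => (G1 ω, G0 ω)) (fun ω => (εL ω, εY ω)) μ)
    (hI1 : Integrable (Y 1 (M 1)) μ) (hI2 : Integrable (Y 1 (M 0)) μ)
    (hI3 : Integrable (Y 1 G1) μ) (hI4 : Integrable (Y 1 G0) μ) :
    ((∫ ω, Y 1 (M 1) ω ∂μ) - ∫ ω, Y 1 (M 0) ω ∂μ)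
      - ((∫ ω, Y 1 G1 ω ∂μ) - ∫ ω, Y 1 G0 ω ∂μ)
    = (γ6 + γ7) * β3 * ((∫ ω, εL ω * εL ω ∂μ) - (∫ ω, εL ω ∂μ) ^ 2) :=
  stmt11_general μ α0 α1 β0 β1 β2 β3 γ0 γ1 γ2 γ3 γ4 γ5 γ6 γ7 εL εM εY hεL hεM hεL2 L M Y hL hM hY G1
    G0 hdist1 hdist0 hindep hI1 hI2 hI3 hI4
end

section
/- Let Y₁, Y₀ be random variables with finite supports 𝓣 and 𝓢 respectively, and let H₁, H₀ be independent random variables with H₁ distributed as Y₁ and H₀ distributed as Y₀. Then P(Y₁ ≥ Y₀) − P(H₁ ≥ H₀) = Σ_{t∈𝓣} Σ_{s∈𝓢} 𝟙(t ≥ s) · Cov(𝟙(Y₁ = t), 𝟙(Y₀ = s)). -/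
/-!
Both probabilities split over the finitely many pairs `(t, s)` with `s ≤ t`: `P(Y₀ ≤ Y₁)` into the
joint point masses `P(Y₁ = t, Y₀ = s)`, and `P(H₀ ≤ H₁)`, by independence and equality of laws, into
the products `P(Y₁ = t) P(Y₀ = s)`. Subtracting term by term gives the covariances.
-/

open MeasureTheory ProbabilityTheory

section

variable {Ω β : Type*} [MeasurableSpace Ω] {μ : Measure Ω} [MeasurableSpace β]

/-- `Measure.map` sends a non-`AEMeasurable` function to the zero measure, so sharing a nonzero
law with `g` already makes `f` almost everywhere measurable. -/
lemma identDistrib_of_map_eq_s18 [NeZero μ] {f g : Ω → β} (hg : AEMeasurable g μ)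
    (h : μ.map f = μ.map g) : IdentDistrib f g μ μ :=
  ⟨.of_map_ne_zero (h ▸ (Measure.map_ne_zero_iff hg).2 (NeZero.ne μ)), hg, h⟩

lemma measureReal_le_eq_sum [MeasurableSingletonClass β] [IsFiniteMeasure μ] [LE β]
    [DecidableLE β] {X Z : Ω → β} (hX : AEMeasurable X μ) (hZ : AEMeasurable Z μ) {T S : Finset β}
    (hXT : ∀ᵐ ω ∂μ, X ω ∈ T) (hZS : ∀ᵐ ω ∂μ, Z ω ∈ S) :
    μ.real {ω | Z ω ≤ X ω} =
      ∑ t ∈ T, ∑ s ∈ S, if s ≤ t then μ.real {ω | X ω = t ∧ Z ω = s} else 0 := by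
  set A := (T ×ˢ S).filter fun p ↦ p.2 ≤ p.1
  have hsupp : {ω | Z ω ≤ X ω} =ᵐ[μ] ⋃ p ∈ A, {ω | X ω = p.1 ∧ Z ω = p.2} := by
    filter_upwards [hXT, hZS] with ω hωT hωS
    refine propext (?_ : ω ∈ {ω | Z ω ≤ X ω} ↔ ω ∈ ⋃ p ∈ A, {ω | X ω = p.1 ∧ Z ω = p.2})
    simp [A, hωT, hωS]
  rw [measureReal_congr hsupp, measureReal_biUnion_finset₀, Finset.sum_filter,
    Finset.sum_product]
  · intro p _ q _ hpq
    refine (Set.disjoint_left.2 fun ω hp hq ↦ hpq ?_).aedisjoint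
    exact Prod.ext (hp.1.symm.trans hq.1) (hp.2.symm.trans hq.2)
  · intro p _
    have hfiber : {ω | X ω = p.1 ∧ Z ω = p.2} = (fun ω ↦ (X ω, Z ω)) ⁻¹' {p} := by
      ext ω; simp [Prod.ext_iff]
    exact hfiber ▸ (hX.prodMk hZ).nullMeasurableSet_preimage (measurableSet_singleton p)

lemma measureReal_eq_and_eq_of_indepFun [MeasurableSingletonClass β] [IsProbabilityMeasure μ]
    {Y₁ Y₀ H₁ H₀ : Ω → β}
    (hY₁ : AEMeasurable Y₁ μ) (hY₀ : AEMeasurable Y₀ μ)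
    (h₁ : μ.map H₁ = μ.map Y₁) (h₀ : μ.map H₀ = μ.map Y₀) (hindep : IndepFun H₁ H₀ μ)
    (t s : β) :
    μ.real {ω | H₁ ω = t ∧ H₀ ω = s} = μ.real {ω | Y₁ ω = t} * μ.real {ω | Y₀ ω = s} := by
  have hlaw₁ := (identDistrib_of_map_eq_s18 hY₁ h₁).measure_mem_eq (measurableSet_singleton t)
  have hlaw₀ := (identDistrib_of_map_eq_s18 hY₀ h₀).measure_mem_eq (measurableSet_singleton s)
  simp only [measureReal_def, ← ENNReal.toReal_mul]
  exact congrArg ENNReal.toReal <| (hindep.measure_inter_preimage_eq_mul _ _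
    (measurableSet_singleton t) (measurableSet_singleton s)).trans (by rw [hlaw₁, hlaw₀]; rfl)

end

theorem stmt18_general {Ω : Type*} [MeasurableSpace Ω] (μ : Measure Ω) [IsProbabilityMeasure μ]
    (Y1 Y0 H1 H0 : Ω → ℝ)
    (hY1meas : Measurable Y1) (hY0meas : Measurable Y0)
    (𝓣 𝓢 : Finset ℝ) (hY1supp : ∀ ω, Y1 ω ∈ 𝓣) (hY0supp : ∀ ω, Y0 ω ∈ 𝓢)
    (hdist1 : Measure.map H1 μ = Measure.map Y1 μ)
    (hdist0 : Measure.map H0 μ = Measure.map Y0 μ)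
    (hindep : IndepFun H1 H0 μ) :
    (μ {ω | Y0 ω ≤ Y1 ω}).toReal - (μ {ω | H0 ω ≤ H1 ω}).toReal
    = ∑ t ∈ 𝓣, ∑ s ∈ 𝓢, (if s ≤ t then (1:ℝ) else 0)
        * ((μ {ω | Y1 ω = t ∧ Y0 ω = s}).toReal
            - (μ {ω | Y1 ω = t}).toReal * (μ {ω | Y0 ω = s}).toReal) := by
  have hlaw₁ := identDistrib_of_map_eq_s18 hY1meas.aemeasurable hdist1
  have hlaw₀ := identDistrib_of_map_eq_s18 hY0meas.aemeasurable hdist0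
  have hH1supp : ∀ᵐ ω ∂μ, H1 ω ∈ 𝓣 :=
    hlaw₁.symm.ae_mem_snd 𝓣.measurableSet (.of_forall hY1supp)
  have hH0supp : ∀ᵐ ω ∂μ, H0 ω ∈ 𝓢 :=
    hlaw₀.symm.ae_mem_snd 𝓢.measurableSet (.of_forall hY0supp)
  simp only [← measureReal_def]
  rw [measureReal_le_eq_sum hY1meas.aemeasurable hY0meas.aemeasurable
      (.of_forall hY1supp) (.of_forall hY0supp),
    measureReal_le_eq_sum hlaw₁.aemeasurable_fst hlaw₀.aemeasurable_fst hH1supp hH0supp]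
  simp only [measureReal_eq_and_eq_of_indepFun hY1meas.aemeasurable hY0meas.aemeasurable
    hdist1 hdist0 hindep, ← Finset.sum_sub_distrib]
  refine Finset.sum_congr rfl fun t _ ↦ Finset.sum_congr rfl fun s _ ↦ ?_
  split_ifs <;> ring

/-- Proposition 7, discrete outcomes:
P(Y₁ ≥ Y₀) − P(H₁ ≥ H₀) = Σ_t Σ_s 𝟙(t ≥ s) Cov(𝟙(Y₁=t), 𝟙(Y₀=s)). -/
theorem stmt18 {Ω : Type*} [MeasurableSpace Ω] (μ : Measure Ω) [IsProbabilityMeasure μ]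
    (Y1 Y0 H1 H0 : Ω → ℝ)
    (hY1meas : Measurable Y1) (hY0meas : Measurable Y0)
    (hH1meas : Measurable H1) (hH0meas : Measurable H0)
    (𝓣 𝓢 : Finset ℝ) (hY1supp : ∀ ω, Y1 ω ∈ 𝓣) (hY0supp : ∀ ω, Y0 ω ∈ 𝓢)
    (hdist1 : Measure.map H1 μ = Measure.map Y1 μ)
    (hdist0 : Measure.map H0 μ = Measure.map Y0 μ)
    (hindep : IndepFun H1 H0 μ) :
    (μ {ω | Y0 ω ≤ Y1 ω}).toReal - (μ {ω | H0 ω ≤ H1 ω}).toReal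
    = ∑ t ∈ 𝓣, ∑ s ∈ 𝓢, (if s ≤ t then (1:ℝ) else 0)
        * ((μ {ω | Y1 ω = t ∧ Y0 ω = s}).toReal
            - (μ {ω | Y1 ω = t}).toReal * (μ {ω | Y0 ω = s}).toReal) :=
  stmt18_general μ Y1 Y0 H1 H0 hY1meas hY0meas 𝓣 𝓢 hY1supp hY0supp hdist1 hdist0 hindep
end

section
/- Let Y₁, Y₀ be {0,1}-valued random variables, and H₁, H₀ independent with H_a distributed as Y_a. Then P(Y₁ ≥ Y₀) − P(H₁ ≥ H₀) = Cov(Y₁, Y₀). -/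
/-!
For `a, b ∈ {0, 1}` one has `𝟙[b ≤ a] = 1 - b + a b`, so `P(Y₀ ≤ Y₁) = 1 - E Y₀ + E[Y₁ Y₀]`, and
likewise `P(H₀ ≤ H₁) = 1 - E H₀ + E[H₁ H₀] = 1 - E Y₀ + E Y₁ · E Y₀` by independence and equality
of the marginals. Subtracting leaves `Cov(Y₁, Y₀)`.
-/

open MeasureTheory ProbabilityTheory

lemma ite_le_one_zero_eq_of_binary {a b : ℝ} (ha : a = 0 ∨ a = 1) (hb : b = 0 ∨ b = 1) :
    (if b ≤ a then (1 : ℝ) else 0) = 1 - b + a * b := by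
  rcases ha with rfl | rfl <;> rcases hb with rfl | rfl <;> norm_num

lemma integrable_of_ae_binary {Ω : Type*} [MeasurableSpace Ω] {μ : Measure Ω}
    [IsFiniteMeasure μ] {X : Ω → ℝ} (hX : AEMeasurable X μ)
    (hbin : ∀ᵐ ω ∂μ, X ω = 0 ∨ X ω = 1) : Integrable X μ :=
  Integrable.of_mem_Icc 0 1 hX <| hbin.mono fun ω h => by rcases h with h | h <;> simp [h]

lemma measureReal_le_eq_of_ae_binary {Ω : Type*} [MeasurableSpace Ω] {μ : Measure Ω}
    [IsProbabilityMeasure μ] {X1 X0 : Ω → ℝ} (hX1 : Measurable X1) (hX0 : Measurable X0)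
    (hbin1 : ∀ᵐ ω ∂μ, X1 ω = 0 ∨ X1 ω = 1) (hbin0 : ∀ᵐ ω ∂μ, X0 ω = 0 ∨ X0 ω = 1) :
    μ.real {ω | X0 ω ≤ X1 ω} = 1 - ∫ ω, X0 ω ∂μ + ∫ ω, X1 ω * X0 ω ∂μ := by
  have hint1 := integrable_of_ae_binary hX1.aemeasurable hbin1
  have hint0 := integrable_of_ae_binary hX0.aemeasurable hbin0
  have hint10 : Integrable (fun ω => X1 ω * X0 ω) μ :=
    integrable_of_ae_binary (hX1.mul hX0).aemeasurable <| by
      filter_upwards [hbin1, hbin0] with ω h1 h0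
      rcases h1 with h1 | h1 <;> simp [h1, h0]
  have hpointwise : {ω | X0 ω ≤ X1 ω}.indicator 1 =ᵐ[μ] fun ω => 1 - X0 ω + X1 ω * X0 ω := by
    filter_upwards [hbin1, hbin0] with ω h1 h0
    simpa [Set.indicator_apply] using ite_le_one_zero_eq_of_binary h1 h0
  rw [← integral_indicator_one (measurableSet_le hX0 hX1), integral_congr_ae hpointwise,
    integral_add (f := fun ω => 1 - X0 ω) ((integrable_const 1).sub hint0) hint10,
    integral_sub (integrable_const 1) hint0]
  simp

/-- Proposition 7, binary outcomes:
P(Y₁ ≥ Y₀) − P(H₁ ≥ H₀) = Cov(Y₁, Y₀). -/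
theorem stmt19 {Ω : Type*} [MeasurableSpace Ω] (μ : Measure Ω) [IsProbabilityMeasure μ]
    (Y1 Y0 H1 H0 : Ω → ℝ)
    (hY1meas : Measurable Y1) (hY0meas : Measurable Y0)
    (hH1meas : Measurable H1) (hH0meas : Measurable H0)
    (hY1 : ∀ ω, Y1 ω = 0 ∨ Y1 ω = 1) (hY0 : ∀ ω, Y0 ω = 0 ∨ Y0 ω = 1)
    (hdist1 : Measure.map H1 μ = Measure.map Y1 μ)
    (hdist0 : Measure.map H0 μ = Measure.map Y0 μ)
    (hindep : IndepFun H1 H0 μ) :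
    (μ {ω | Y0 ω ≤ Y1 ω}).toReal - (μ {ω | H0 ω ≤ H1 ω}).toReal
    = (∫ ω, Y1 ω * Y0 ω ∂μ) - (∫ ω, Y1 ω ∂μ) * ∫ ω, Y0 ω ∂μ := by
  have hident1 : IdentDistrib Y1 H1 μ μ :=
    ⟨hY1meas.aemeasurable, hH1meas.aemeasurable, hdist1.symm⟩
  have hident0 : IdentDistrib Y0 H0 μ μ :=
    ⟨hY0meas.aemeasurable, hH0meas.aemeasurable, hdist0.symm⟩
  have hbinary : MeasurableSet {x : ℝ | x = 0 ∨ x = 1} :=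
    (measurableSet_singleton 0).union (measurableSet_singleton 1)
  have hH1 := hident1.ae_snd hbinary (.of_forall hY1)
  have hH0 := hident0.ae_snd hbinary (.of_forall hY0)
  have hY := measureReal_le_eq_of_ae_binary (μ := μ) hY1meas hY0meas (.of_forall hY1) (.of_forall hY0)
  have hH := measureReal_le_eq_of_ae_binary hH1meas hH0meas hH1 hH0
  rw [hindep.integral_fun_mul_eq_mul_integral hH1meas.aestronglyMeasurable
    hH0meas.aestronglyMeasurable, hident1.integral_eq.symm, hident0.integral_eq.symm] at hH
  rw [← measureReal_def, ← measureReal_def, hY, hH]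
  ring
end
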